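/- arXiv:1709.03625 — 4 statements merged into one kernel-verified Lean document; each statement's English description precedes it below -/
import Mathlib

section
/- Let V be a finite type and f : Finset V → ℝ be monotonically increasing and submodular. Then for all finite sets S, T ⊆ V, f(T) ≤ f(S) + Σ_{t ∈ T} (f(S ∪ {t}) − f(S)). (Key telescoping inequality, steps (a)–(b) in the proof of Theorem 3, applied with T the optimal intervention set I* and S the greedy set Iᵢ.) -/
/-- Key telescoping inequality (steps (a)–(b) in the proof of Theorem 3): for a
monotonically increasing submodular set function `f`,
`f(T) ≤ f(S) + ∑_{t ∈ T} (f(S ∪ {t}) − f(S))`. -/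
theorem submodular_telescoping {V : Type*} [Fintype V] [DecidableEq V]
    (f : Finset V → ℝ)
    (hmono : ∀ S T : Finset V, S ⊆ T → f S ≤ f T)
    (hsub : ∀ S T : Finset V, S ⊆ T → ∀ v : V,
      f (S ∪ {v}) - f S ≥ f (T ∪ {v}) - f T)
    (S T : Finset V) :
    f T ≤ f S + ∑ t ∈ T, (f (S ∪ {t}) - f S) := by
  have key : ∀ T : Finset V, f (S ∪ T) ≤ f S + ∑ t ∈ T, (f (S ∪ {t}) - f S) := by
    intro T
    induction T using Finset.induction with
    | empty => simp
    | @insert a T ha ih =>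
      rw [Finset.sum_insert ha]
      have h1 : f (S ∪ insert a T) - f (S ∪ T) ≤ f (S ∪ {a}) - f S := by
        have := hsub S (S ∪ T) Finset.subset_union_left a
        have heq : S ∪ insert a T = (S ∪ T) ∪ {a} := by
          ext x; simp [or_comm, or_assoc, or_left_comm]
        rw [heq]; linarith
      linarith
  calc f T ≤ f (S ∪ T) := hmono T (S ∪ T) Finset.subset_union_right
    _ ≤ _ := key T
end

section
/- (Deterministic core of Theorem 3.) Let V be a finite type with |V| ≥ k ≥ 1, let f : Finset V → ℝ be monotonically increasing and submodular with f(∅) = 0, let ε ≥ 0, and let f̂ : Finset V → ℝ be an approximate evaluator satisfying |f̂(S) − f(S)| ≤ ε·f(S) for every S ⊆ V. Suppose the sets I₀ = ∅ and I_{i+1} = Iᵢ ∪ {vᵢ} for i = 0, …, k−1 are produced greedily, where at each step vᵢ ∈ V \ Iᵢ maximizes the approximate marginal gain: f̂(Iᵢ ∪ {vᵢ}) − f̂(Iᵢ) ≥ f̂(Iᵢ ∪ {v}) − f̂(Iᵢ) for all v ∈ V \ Iᵢ. Then f(I_k) ≥ (1 − 1/e − 4εk) · max{ f(S) : S ⊆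 V, |S| = k }. -/
private lemma submod_sum {V : Type*} [DecidableEq V]
    (f : Finset V → ℝ)
    (hsub : ∀ S T : Finset V, S ⊆ T → ∀ v : V,
      f (S ∪ {v}) - f S ≥ f (T ∪ {v}) - f T)
    (A : Finset V) (B : Finset V) :
    f (A ∪ B) ≤ f A + ∑ w ∈ B, (f (A ∪ {w}) - f A) := by
  induction B using Finset.induction_on with
  | empty => simp
  | @insert b B hb ih =>
    have h1 : A ∪ insert b B = (A ∪ B) ∪ {b} := by
      ext x; simp
    rw [h1, Finset.sum_insert hb]
    have h2 := hsub A (A ∪ B) Finset.subset_union_left b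
    linarith

/-- Deterministic core of Theorem 3: greedy selection with an `ε`-approximate evaluator
of a monotone submodular function `f` with `f(∅) = 0` achieves a
`(1 − 1/e − 4εk)`-approximation of the optimum over sets of cardinality `k`. -/
theorem approx_greedy_guarantee {V : Type*} [Fintype V] [DecidableEq V]
    (k : ℕ) (hk : 1 ≤ k) (hV : k ≤ Fintype.card V)
    (f : Finset V → ℝ)
    (hmono : ∀ S T : Finset V, S ⊆ T → f S ≤ f T)
    (hsub : ∀ S T : Finset V, S ⊆ T → ∀ v : V,
      f (S ∪ {v}) - f S ≥ f (T ∪ {v}) - f T)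
    (hempty : f ∅ = 0)
    (ε : ℝ) (hε : 0 ≤ ε)
    (fhat : Finset V → ℝ)
    (happrox : ∀ S : Finset V, |fhat S - f S| ≤ ε * f S)
    (I : ℕ → Finset V) (v : ℕ → V)
    (hI0 : I 0 = ∅)
    (hstep : ∀ i < k, I (i + 1) = I i ∪ {v i})
    (hnew : ∀ i < k, v i ∉ I i)
    (hgreedy : ∀ i < k, ∀ w : V, w ∉ I i →
      fhat (I i ∪ {v i}) - fhat (I i) ≥ fhat (I i ∪ {w}) - fhat (I i)) :
    ∀ S : Finset V, S.card = k →
      f (I k) ≥ (1 - 1 / Real.exp 1 - 4 * ε * k) * f S := by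
  intro S hS
  have fnn : ∀ T : Finset V, 0 ≤ f T := fun T => hempty ▸ hmono ∅ T (Finset.empty_subset T)
  -- the collection of size-k sets and the optimum
  have hne : (Finset.univ.powersetCard k (α := V)).Nonempty := by
    obtain ⟨t, ht, htc⟩ := Finset.exists_subset_card_eq (s := (Finset.univ : Finset V)) (n := k)
      (by simpa using hV)
    exact ⟨t, by simp [Finset.mem_powersetCard, ht, htc]⟩
  set OPT : ℝ := (Finset.univ.powersetCard k (α := V)).sup' hne f with hOPTdef
  have hfle : ∀ T : Finset V, T.card ≤ k → f T ≤ OPT := by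
    intro T hT
    obtain ⟨U, hTU, hUuniv, hUc⟩ := Finset.exists_subsuperset_card_eq
      (Finset.subset_univ T) hT (by simpa using hV)
    calc f T ≤ f U := hmono T U hTU
    _ ≤ OPT := Finset.le_sup' f (by simp [Finset.mem_powersetCard, hUc])
  have hSle : f S ≤ OPT := hfle S hS.le
  have hOPT0 : 0 ≤ OPT := le_trans (fnn S) hSle
  have hk0 : (0:ℝ) < (k:ℝ) := by exact_mod_cast hk
  -- cardinalities of the greedy sets
  have hcard : ∀ i, i ≤ k → (I i).card = i := by
    intro i
    induction i with
    | zero => intro _; simp [hI0]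
    | succ n ihn =>
      intro h
      have hn : n < k := h
      have he : I n ∪ {v n} = insert (v n) (I n) := by
        ext x; simp [or_comm]
      rw [hstep n hn, he, Finset.card_insert_of_notMem (hnew n hn), ihn hn.le]
  -- existence of a good candidate at each step
  have hcand : ∀ i, i < k → ∃ w : V, w ∉ I i ∧
      (OPT - f (I i)) / k ≤ f (I i ∪ {w}) - f (I i) := by
    intro i hi
    by_cases hle : OPT ≤ f (I i)
    · refine ⟨v i, hnew i hi, ?_⟩
      have g0 : 0 ≤ f (I i ∪ {v i}) - f (I i) := by
        have := hmono (I i) (I i ∪ {v i}) Finset.subset_union_left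
        linarith
      have : (OPT - f (I i)) / k ≤ 0 := div_nonpos_of_nonpos_of_nonneg (by linarith) hk0.le
      linarith
    · push_neg at hle
      obtain ⟨T, hTmem, hTval⟩ := Finset.exists_mem_eq_sup' hne f
      have hTcard : T.card = k := (Finset.mem_powersetCard.mp hTmem).2
      have hBne : (T \ I i).Nonempty := by
        rw [Finset.sdiff_nonempty]
        intro hsub'
        have := hmono T (I i) hsub'
        rw [← hTval] at this
        linarith
      set B := T \ I i with hB
      have hBcard : 1 ≤ B.card := Finset.card_pos.mpr hBne
      have hBk : B.card ≤ k := by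
        calc B.card ≤ T.card := Finset.card_le_card (Finset.sdiff_subset)
        _ = k := hTcard
      have hsum : OPT - f (I i) ≤ ∑ w ∈ B, (f (I i ∪ {w}) - f (I i)) := by
        have h1 : OPT ≤ f (I i ∪ B) := by
          rw [hB, Finset.union_sdiff_self_eq_union, hOPTdef, hTval]
          exact hmono T _ Finset.subset_union_right
        have h2 := submod_sum f hsub (I i) B
        linarith
      have hn0 : (0:ℝ) < (B.card : ℝ) := by exact_mod_cast hBcard
      obtain ⟨w, hwB, hw⟩ := Finset.exists_le_of_sum_le hBne
        (f := fun _ => (OPT - f (I i)) / B.card) (g := fun w => f (I i ∪ {w}) - f (I i))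
        (by
          rw [Finset.sum_const, nsmul_eq_mul, mul_div_cancel₀ _ (ne_of_gt hn0)]
          exact hsum)
      refine ⟨w, (Finset.mem_sdiff.mp hwB).2, ?_⟩
      have hdiv : (OPT - f (I i)) / k ≤ (OPT - f (I i)) / B.card := by
        apply div_le_div_of_nonneg_left (by linarith) hn0
        exact_mod_cast hBk
      linarith
  -- per-step progress
  have hprog : ∀ i, i < k → f (I i) + (OPT - f (I i)) / k - 2 * ε * OPT ≤ f (I (i + 1)) := by
    intro i hi
    obtain ⟨w, hwI, hw⟩ := hcand i hi
    have hgr := hgreedy i hi w hwI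
    have ha1 := abs_le.mp (happrox (I (i + 1)))
    have ha2 := abs_le.mp (happrox (I i ∪ {w}))
    have hb1 : f (I (i + 1)) ≤ OPT := by
      apply hfle; rw [hcard (i+1) hi]; exact hi
    have hb2 : f (I i ∪ {w}) ≤ OPT := by
      apply hfle
      have he : I i ∪ {w} = insert w (I i) := by
        ext x; simp [or_comm]
      rw [he, Finset.card_insert_of_notMem hwI, hcard i hi.le]
      exact hi
    have hfhat : fhat (I i ∪ {w}) ≤ fhat (I (i + 1)) := by
      rw [hstep i hi]; linarith
    have he1 : ε * f (I (i + 1)) ≤ ε * OPT := by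
      exact mul_le_mul_of_nonneg_left hb1 hε
    have he2 : ε * f (I i ∪ {w}) ≤ ε * OPT := by
      exact mul_le_mul_of_nonneg_left hb2 hε
    -- f (I (i+1)) ≥ fhat (I (i+1)) - ε f(I(i+1)) ≥ fhat(Ii∪{w}) - εOPT ≥ f(Ii∪{w}) - 2εOPT
    linarith
  -- the recurrence
  have hrec : ∀ i, i ≤ k → OPT - f (I i) ≤ (1 - 1/k)^i * OPT + 2 * ε * i * OPT := by
    intro i
    induction i with
    | zero => intro _; simp [hI0, hempty]
    | succ n ihn =>
      intro h
      have hn : n < k := h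
      have ih := ihn hn.le
      have hp := hprog n hn
      have h1k : (0:ℝ) ≤ 1 - 1/k := by
        rw [sub_nonneg, div_le_one hk0]; exact_mod_cast hk
      have key : OPT - f (I (n + 1)) ≤ (1 - 1/k) * (OPT - f (I n)) + 2 * ε * OPT := by
        have : (1 - 1/k) * (OPT - f (I n)) = OPT - f (I n) - (OPT - f (I n)) / k := by
          field_simp
        rw [this]; linarith
      have step2 : (1 - 1/k) * (OPT - f (I n)) ≤ (1 - 1/k) * ((1 - 1/k)^n * OPT + 2 * ε * n * OPT) :=
        mul_le_mul_of_nonneg_left ih h1k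
      have step3 : (1 - 1/k) * ((1 - 1/k)^n * OPT + 2 * ε * n * OPT)
          ≤ (1 - 1/k)^(n+1) * OPT + 2 * ε * n * OPT := by
        have h1k' : 1 - 1/(k:ℝ) ≤ 1 := by
          have : 0 ≤ 1/(k:ℝ) := by positivity
          linarith
        have hnn : (0:ℝ) ≤ 2 * ε * n * OPT := by positivity
        have hQ : (1 - 1/(k:ℝ)) * (2 * ε * n * OPT) ≤ 2 * ε * n * OPT := by nlinarith
        calc (1 - 1/(k:ℝ)) * ((1 - 1/k)^n * OPT + 2 * ε * n * OPT)
            = (1 - 1/k)^(n+1) * OPT + (1 - 1/k) * (2 * ε * n * OPT) := by ring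
          _ ≤ (1 - 1/k)^(n+1) * OPT + 2 * ε * n * OPT := by linarith
      push_cast
      calc OPT - f (I (n + 1)) ≤ (1 - 1/k) * (OPT - f (I n)) + 2 * ε * OPT := key
        _ ≤ (1 - 1/k)^(n+1) * OPT + 2 * ε * n * OPT + 2 * ε * OPT := by linarith
        _ ≤ (1 - 1/k)^(n+1) * OPT + 2 * ε * (n+1) * OPT := by ring_nf; linarith
  -- conclude
  have hfinal := hrec k le_rfl
  have hpow : (1 - 1/(k:ℝ))^k ≤ 1 / Real.exp 1 := by
    have h1k : (0:ℝ) ≤ 1 - 1/k := by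
      rw [sub_nonneg, div_le_one hk0]; exact_mod_cast hk
    have h1 : 1 - 1/(k:ℝ) ≤ Real.exp (-(1/k)) := by
      have := Real.add_one_le_exp (-(1/(k:ℝ)))
      linarith
    calc (1 - 1/(k:ℝ))^k ≤ (Real.exp (-(1/k)))^k := pow_le_pow_left₀ h1k h1 k
      _ = Real.exp ((k:ℝ) * (-(1/k))) := by rw [← Real.exp_nat_mul]
      _ = Real.exp (-1) := by
        congr 1; field_simp
      _ = 1 / Real.exp 1 := by rw [Real.exp_neg]; rw [one_div]
  have hIk : (1 - 1/Real.exp 1 - 4 * ε * k) * OPT ≤ f (I k) := by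
    have h1 : OPT - f (I k) ≤ (1/Real.exp 1) * OPT + 2 * ε * k * OPT := by
      have := mul_le_mul_of_nonneg_right hpow hOPT0
      linarith
    nlinarith [mul_nonneg (mul_nonneg (mul_nonneg (by norm_num : (0:ℝ) ≤ 2) hε) (Nat.cast_nonneg k : (0:ℝ) ≤ k)) hOPT0]
  by_cases hc : 0 ≤ 1 - 1/Real.exp 1 - 4 * ε * k
  · calc (1 - 1/Real.exp 1 - 4 * ε * k) * f S
        ≤ (1 - 1/Real.exp 1 - 4 * ε * k) * OPT := mul_le_mul_of_nonneg_left hSle hc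
      _ ≤ f (I k) := hIk
  · push_neg at hc
    have : (1 - 1/Real.exp 1 - 4 * ε * k) * f S ≤ 0 :=
      mul_nonpos_of_nonpos_of_nonneg hc.le (fnn S)
    linarith [fnn (I k)]
end

section
/- (Nemhauser–Wolsey–Fisher guarantee, as used in the paper; the ε = 0 case of Theorem 3.) Let V be a finite type with |V| ≥ k ≥ 1 and let f : Finset V → ℝ be monotonically increasing and submodular with f(∅) = 0. Suppose the sets I₀ = ∅ and I_{i+1} = Iᵢ ∪ {vᵢ} for i = 0, …, k−1 are produced greedily, where at each step vᵢ ∈ V \ Iᵢ satisfies f(Iᵢ ∪ {vᵢ}) − f(Iᵢ) ≥ f(Iᵢ ∪ {v}) − f(Iᵢ) for all v ∈ V \ Iᵢ. Then f(I_k) ≥ (1 − 1/e) · max{ f(S) : S ⊆ V, |S| = k }. -/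
/-- Submodular expansion: the gain of adding a whole set is at most the sum of
singleton gains. -/
lemma marg_sum_aux {V : Type*} [DecidableEq V] (f : Finset V → ℝ)
    (hsub : ∀ S T : Finset V, S ⊆ T → ∀ v : V,
      f (S ∪ {v}) - f S ≥ f (T ∪ {v}) - f T)
    (A : Finset V) :
    ∀ T : Finset V, f (A ∪ T) - f A ≤ ∑ x ∈ T, (f (A ∪ {x}) - f A) := by
  intro T
  induction T using Finset.induction_on with
  | empty => simp
  | @insert x T hx ih =>
    have h1 : A ∪ insert x T = (A ∪ T) ∪ {x} := by
      ext y; simp [Finset.mem_insert, Finset.mem_union]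
    have h2 := hsub A (A ∪ T) Finset.subset_union_left x
    rw [Finset.sum_insert hx, h1]
    linarith

/-- Nemhauser–Wolsey–Fisher guarantee (the `ε = 0` case of Theorem 3): the greedy
algorithm for a monotone submodular function `f` with `f(∅) = 0` achieves a
`(1 − 1/e)`-approximation of the optimum over sets of cardinality `k`. -/
theorem greedy_guarantee {V : Type*} [Fintype V] [DecidableEq V]
    (k : ℕ) (hk : 1 ≤ k) (hV : k ≤ Fintype.card V)
    (f : Finset V → ℝ)
    (hmono : ∀ S T : Finset V, S ⊆ T → f S ≤ f T)
    (hsub : ∀ S T : Finset V, S ⊆ T → ∀ v : V,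
      f (S ∪ {v}) - f S ≥ f (T ∪ {v}) - f T)
    (hempty : f ∅ = 0)
    (I : ℕ → Finset V) (v : ℕ → V)
    (hI0 : I 0 = ∅)
    (hstep : ∀ i < k, I (i + 1) = I i ∪ {v i})
    (hnew : ∀ i < k, v i ∉ I i)
    (hgreedy : ∀ i < k, ∀ w : V, w ∉ I i →
      f (I i ∪ {v i}) - f (I i) ≥ f (I i ∪ {w}) - f (I i)) :
    ∀ S : Finset V, S.card = k →
      f (I k) ≥ (1 - 1 / Real.exp 1) * f S := by
  intro S hS
  have hkpos : (0 : ℝ) < k := by exact_mod_cast hk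
  set g : ℕ → ℝ := fun i => f S - f (I i) with hg
  have hfS0 : 0 ≤ f S := by rw [← hempty]; exact hmono _ _ (Finset.empty_subset S)
  -- per-step bound: g (i+1) ≤ (1 - 1/k) * g i
  have step : ∀ i < k, g (i + 1) ≤ (1 - 1 / k) * g i := by
    intro i hi
    set δ : ℝ := f (I i ∪ {v i}) - f (I i) with hδ
    have hδ0 : 0 ≤ δ := by
      have := hmono (I i) (I i ∪ {v i}) Finset.subset_union_left; linarith
    -- each singleton gain over I i is ≤ δ
    have hterm : ∀ x ∈ S, f (I i ∪ {x}) - f (I i) ≤ δ := by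
      intro x _
      by_cases hxI : x ∈ I i
      · have : I i ∪ {x} = I i := by
          apply Finset.union_eq_left.mpr; simp [hxI]
        rw [this]; simpa using hδ0
      · exact hgreedy i hi x hxI
    have hsum : f (I i ∪ S) - f (I i) ≤ ∑ x ∈ S, (f (I i ∪ {x}) - f (I i)) :=
      marg_sum_aux f hsub (I i) S
    have hsum2 : ∑ x ∈ S, (f (I i ∪ {x}) - f (I i)) ≤ (k : ℝ) * δ := by
      calc ∑ x ∈ S, (f (I i ∪ {x}) - f (I i)) ≤ ∑ _x ∈ S, δ :=
            Finset.sum_le_sum hterm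
        _ = (k : ℝ) * δ := by rw [Finset.sum_const, hS]; ring
    have hSle : f S ≤ f (I i ∪ S) := hmono _ _ Finset.subset_union_right
    have hgi : g i ≤ (k : ℝ) * δ := by
      simp only [hg]; linarith
    have hstep' : f (I (i + 1)) = f (I i) + δ := by
      rw [hstep i hi]; simp [hδ]
    have : g (i + 1) = g i - δ := by simp only [hg, hstep']; ring
    rw [this]
    have hδge : δ ≥ g i / k := by
      rw [ge_iff_le, div_le_iff₀ hkpos]; linarith
    have : g i - δ ≤ g i - g i / k := by linarith
    calc g i - δ ≤ g i - g i / k := this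
      _ = (1 - 1 / k) * g i := by field_simp
  have hbase : (0:ℝ) ≤ 1 - 1 / k := by
    have : 1 / (k : ℝ) ≤ 1 := by
      rw [div_le_one hkpos]; exact_mod_cast hk
    linarith
  -- iterate
  have iter : ∀ i ≤ k, g i ≤ (1 - 1 / k) ^ i * f S := by
    intro i
    induction i with
    | zero => intro _; simp [hg, hI0, hempty]
    | succ n ih =>
      intro hn
      have hn' : n < k := hn
      have h1 := step n hn'
      have h2 := ih (le_of_lt hn')
      calc g (n + 1) ≤ (1 - 1 / k) * g n := h1
        _ ≤ (1 - 1 / k) * ((1 - 1 / k) ^ n * f S) := by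
            exact mul_le_mul_of_nonneg_left h2 hbase
        _ = (1 - 1 / k) ^ (n + 1) * f S := by ring
  have hgk := iter k le_rfl
  -- (1 - 1/k)^k ≤ 1 / e
  have hexp : (1 - 1 / (k:ℝ)) ^ k ≤ 1 / Real.exp 1 := by
    have h1 : (1 : ℝ) - 1 / k ≤ Real.exp (-(1 / k)) := by
      have := Real.add_one_le_exp (-(1 / (k:ℝ))); linarith
    calc (1 - 1 / (k:ℝ)) ^ k ≤ Real.exp (-(1 / k)) ^ k :=
          pow_le_pow_left₀ hbase h1 k
      _ = Real.exp (-(1 / k) * k) := by rw [← Real.exp_nat_mul]; ring_nf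
      _ = Real.exp (-1) := by
          congr 1; field_simp
      _ = 1 / Real.exp 1 := by rw [Real.exp_neg]; exact (one_div _).symm
  have hfinal : g k ≤ (1 / Real.exp 1) * f S := by
    calc g k ≤ (1 - 1 / k) ^ k * f S := hgk
      _ ≤ (1 / Real.exp 1) * f S :=
          mul_le_mul_of_nonneg_right hexp hfS0
  simp only [hg] at hfinal
  linarith
end

section
/- (Appendix Lemma: triangles in acyclicity checks for chordal graphs.) Let G be a finite simple graph that is chordal, meaning every cycle of G of length at least 4 has a chord (an edge of G joining two vertices of the cycle that are not consecutive on the cycle). Let r be an orientation of G: for every pair u, v, exactly one of r u v or r v u holds when u and v are adjacent in G, and neither holds otherwise. If the oriented graph contains a directed cycle — a sequence of distinct vertices v₁, …, v_n (n ≥ 3) with r vᵢ v_{i+1} for 1 ≤ i < n and r v_n v₁ — then it contains a directed cycle of length 3, i.e., there exist vertices a, b, c with r a b, r b c, and r c a. -/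
/-- Appendix Lemma: a chordal graph (every cycle of length at least 4 has a chord) with an
orientation `r` has a directed cycle only if it has a directed cycle of length 3. Cycles
of length `n` are represented by injective maps `ZMod n → V` with cyclically consecutive
vertices adjacent. -/
theorem chordal_directed_cycle_of_length_three {V : Type*} [Fintype V]
    (G : SimpleGraph V)
    (hchordal : ∀ n : ℕ, 4 ≤ n → ∀ c : ZMod n → V, Function.Injective c →
      (∀ i : ZMod n, G.Adj (c i) (c (i + 1))) →
      ∃ i j : ZMod n, G.Adj (c i) (c j) ∧ j ≠ i + 1 ∧ i ≠ j + 1)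
    (r : V → V → Prop)
    (hor : ∀ u v : V, G.Adj u v ↔ (r u v ∨ r v u))
    (hasym : ∀ u v : V, ¬(r u v ∧ r v u))
    (hcycle : ∃ n : ℕ, 3 ≤ n ∧ ∃ c : ZMod n → V, Function.Injective c ∧
      ∀ i : ZMod n, r (c i) (c (i + 1))) :
    ∃ a b c : V, r a b ∧ r b c ∧ r c a := by
  have key : ∀ n : ℕ, 3 ≤ n → ∀ c : ZMod n → V, Function.Injective c →
      (∀ i : ZMod n, r (c i) (c (i + 1))) → ∃ a b d : V, r a b ∧ r b d ∧ r d a := by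
    intro n
    induction n using Nat.strong_induction_on with
    | _ n ih =>
    intro hn3 c hinj hr
    rcases eq_or_lt_of_le hn3 with h3 | h4
    · -- n = 3
      subst h3
      refine ⟨c 0, c 1, c 2, ?_, ?_, ?_⟩
      · have := hr 0; norm_num at this; exact this
      · have := hr 1; norm_num [show ((1:ZMod 3) + 1) = 2 by decide] at this; exact this
      · have := hr 2; norm_num [show ((2:ZMod 3) + 1) = 0 by decide] at this; exact this
    · -- n ≥ 4
      haveI : NeZero n := ⟨by omega⟩
      have hadj : ∀ i : ZMod n, G.Adj (c i) (c (i + 1)) :=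
        fun i => (hor _ _).2 (Or.inl (hr i))
      obtain ⟨i, j, hadjij, hji, hij⟩ := hchordal n h4 c hinj hadj
      -- key step: a chord oriented from `p` to `q` gives a shorter directed cycle
      have step : ∀ p q : ZMod n, r (c p) (c q) → q ≠ p + 1 → p ≠ q + 1 →
          ∃ a b d : V, r a b ∧ r b d ∧ r d a := by
        intro p q hrpq hqp hpq
        have hpqne : p ≠ q := fun h => ((hor _ _).2 (Or.inl hrpq)).ne (congrArg c h)
        have hsub1 : (((p - q).val : ℕ) : ZMod n) = p - q := ZMod.natCast_zmod_val _
        have hk0 : (p - q).val ≠ 0 := by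
          rw [Ne, ZMod.val_eq_zero, sub_eq_zero]; exact hpqne
        have hk1 : (p - q).val ≠ 1 := by
          intro h
          apply hpq
          have hs : p - q = 1 := by rw [← hsub1, h, Nat.cast_one]
          linear_combination hs
        have hkn1 : (p - q).val ≠ n - 1 := by
          intro h
          apply hqp
          have hs : p - q = -1 := by
            rw [← hsub1, h, Nat.cast_sub (by omega), ZMod.natCast_self, Nat.cast_one, zero_sub]
          linear_combination -hs
        have hklt : (p - q).val < n := ZMod.val_lt _
        have hm3 : 3 ≤ (p - q).val + 1 := by omega
        have hmn : (p - q).val + 1 < n := by omega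
        haveI : NeZero ((p - q).val + 1) := ⟨by omega⟩
        apply ih ((p - q).val + 1) hmn hm3 (fun t : ZMod ((p - q).val + 1) => c (q + (t.val : ZMod n)))
        · intro t₁ t₂ h
          have h2 := add_left_cancel (hinj h)
          have h3 := congrArg ZMod.val h2
          rw [ZMod.val_cast_of_lt (by have := t₁.val_lt; omega),
            ZMod.val_cast_of_lt (by have := t₂.val_lt; omega)] at h3
          exact ZMod.val_injective _ h3
        · intro t
          have hval : (t + 1).val = (t.val + 1) % ((p - q).val + 1) := by
            rw [ZMod.val_add, ZMod.val_one'' (by omega)]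
          by_cases hlast : t.val = (p - q).val
          · have h1 : (t + 1).val = 0 := by rw [hval, hlast, Nat.mod_self]
            show r (c (q + ((t.val : ℕ) : ZMod n))) (c (q + (((t + 1).val : ℕ) : ZMod n)))
            rw [h1, hlast, hsub1, Nat.cast_zero, add_zero]
            have : q + (p - q) = p := by ring
            rw [this]
            exact hrpq
          · have htlt : t.val + 1 < (p - q).val + 1 := by have := t.val_lt; omega
            have h1 : (t + 1).val = t.val + 1 := by rw [hval, Nat.mod_eq_of_lt htlt]
            show r (c (q + ((t.val : ℕ) : ZMod n))) (c (q + (((t + 1).val : ℕ) : ZMod n)))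
            rw [h1, Nat.cast_add, Nat.cast_one, ← add_assoc]
            exact hr _
      obtain hrij | hrji := (hor _ _).1 hadjij
      · exact step i j hrij hji hij
      · exact step j i hrji hij hji
  obtain ⟨n, hn3, c, hinj, hr⟩ := hcycle
  exact key n hn3 c hinj hr
end
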